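/- For the 5-dimensional complex Novikov algebra N⁵₀₅ (nonzero products e₁e₁ = e₂, e₁e₃ = e₄, e₁e₄ = 2e₅, e₂e₁ = e₃, e₂e₃ = -e₅, e₃e₁ = -e₄, e₄e₁ = -e₅), the bilinear form θ = 3Δ₁₅ - 2Δ₂₄ + Δ₃₃ - Δ₅₁ is a 2-cocycle, i.e., θ(xy,z) = θ(xz,y) and θ(xy,z) - θ(x,yz) = θ(yx,z) - θ(y,xz) for all x, y, z. -/
import Mathlib

/-- The 5-dimensional Novikov algebra `N⁵₀₅` over ℂ, with basis `e₁,…,e₅` and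
nonzero products `e₁e₁ = e₂`, `e₁e₃ = e₄`, `e₁e₄ = 2e₅`, `e₂e₁ = e₃`,
`e₂e₃ = -e₅`, `e₃e₁ = -e₄`, `e₄e₁ = -e₅`. -/
noncomputable def mulN505 (a b : Fin 5 → ℂ) : Fin 5 → ℂ :=
  ![0, a 0 * b 0, a 1 * b 0,
    a 0 * b 2 - a 2 * b 0,
    2 * (a 0 * b 3) - a 1 * b 2 - a 3 * b 0]

/-- The bilinear form `θ = 3Δ₁₅ - 2Δ₂₄ + Δ₃₃ - Δ₅₁` on `N⁵₀₅`. -/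
noncomputable def thetaN505 (a b : Fin 5 → ℂ) : ℂ :=
  3 * (a 0 * b 4) - 2 * (a 1 * b 3) + a 2 * b 2 - a 4 * b 0

/-- `θ = 3Δ₁₅ - 2Δ₂₄ + Δ₃₃ - Δ₅₁` is a 2-cocycle on `N⁵₀₅`. -/
theorem thetaN505_is_cocycle :
    ∀ x y z : Fin 5 → ℂ,
      thetaN505 (mulN505 x y) z = thetaN505 (mulN505 x z) y ∧
      thetaN505 (mulN505 x y) z - thetaN505 x (mulN505 y z)
        = thetaN505 (mulN505 y x) z - thetaN505 y (mulN505 x z) := by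
  intro x y z
  simp only [mulN505, thetaN505, Matrix.cons_val_zero, Matrix.cons_val_one,
    Matrix.head_cons, Matrix.cons_val_two, Matrix.tail_cons, Matrix.cons_val_three,
    Matrix.cons_val_four]
  constructor <;> ring
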